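/- If T, S ∈ B(H) satisfy M*_{ω(T)} = M*_{ω(S)}, then T ⊥_{ωB} S if and only if S ⊥_{ωB} T. -/

import Mathlib

/-!
If `T ⊥_ω S`, fix `λ` and let `t → 0⁺`; pick unit vectors `x` that almost attain
`ω(T + tλS) ≥ ω(T)`. Writing `a = ⟨Tx, x⟩`, `b = ⟨Sx, x⟩`, the triangle inequality makes these
vectors norming for `T`, and `ω(T)² - O(t²) ≤ |a + tλb|² ≤ ω(T)² + 2t Re(ā λ b) + O(t²)`
gives `Re(ā λ b) ≥ -O(t)`. By hypothesis the same vectors are norming for `S`, and with `λ = μ̄`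
(so that `Re(ā μ̄ b) = Re(b̄ μ a)`) we get
`ω(S + μT)² ≥ |b + μa|² ≥ |b|² + 2 Re(b̄ μ a) ≥ |b|² - O(t) → ω(S)²`.
-/

open Filter Topology ComplexOrder

variable {H : Type*} [NormedAddCommGroup H] [InnerProductSpace ℂ H] [CompleteSpace H]

/-- The numerical radius of a bounded operator `T`:
`ω(T) = sup {|⟨Tx, x⟩| : ‖x‖ = 1}`. -/
noncomputable def numRad (T : H →L[ℂ] H) : ℝ :=
  sSup {r : ℝ | ∃ x : H, ‖x‖ = 1 ∧ r = ‖(inner ℂ x (T x) : ℂ)‖}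

/-- Numerical radius Birkhoff orthogonality: `ω(T + λS) ≥ ω(T)` for all `λ ∈ ℂ`. -/
def wBOrth (T S : H →L[ℂ] H) : Prop :=
  ∀ lam : ℂ, numRad T ≤ numRad (T + lam • S)

open ComplexConjugate

lemma Complex.norm_add_sq_eq (z w : ℂ) :
    ‖z + w‖ ^ 2 = ‖z‖ ^ 2 + 2 * (conj z * w).re + ‖w‖ ^ 2 := by
  rw [norm_add_sq (𝕜 := ℂ), RCLike.inner_apply', RCLike.re_to_complex]

lemma Complex.neg_mul_le_re_conj_mul {a c : ℂ} {w t : ℝ} (hw : 0 ≤ w) (ht : 0 < t)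
    (ha : ‖a‖ ≤ w) (h : w - t ^ 2 ≤ ‖a + t * c‖) : -t * (w + ‖c‖ ^ 2) ≤ (conj a * c).re := by
  have hsq : w ^ 2 - 2 * w * t ^ 2 ≤ ‖a + t * c‖ ^ 2 := by
    rcases le_total 0 (w - t ^ 2) with hpos | hneg
    · nlinarith [pow_le_pow_left₀ hpos h 2]
    · nlinarith [sq_nonneg ‖a + t * c‖]
  have hexpand : ‖a + t * c‖ ^ 2 = ‖a‖ ^ 2 + 2 * t * (conj a * c).re + t ^ 2 * ‖c‖ ^ 2 := by
    rw [Complex.norm_add_sq_eq, norm_mul, Complex.norm_real, Real.norm_of_nonneg ht.le,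
      mul_left_comm, Complex.re_ofReal_mul]
    ring
  nlinarith [pow_le_pow_left₀ (norm_nonneg a) ha 2, sq_nonneg ‖c‖]

section

variable {E : Type*} [NormedAddCommGroup E] [InnerProductSpace ℂ E]

lemma numRad_nonneg (A : E →L[ℂ] E) : 0 ≤ numRad A :=
  Real.sSup_nonneg <| by rintro r ⟨x, -, rfl⟩; exact norm_nonneg _

lemma norm_inner_le_numRad (A : E →L[ℂ] E) {x : E} (hx : ‖x‖ = 1) :
    ‖inner ℂ x (A x)‖ ≤ numRad A := by
  refine le_csSup ⟨‖A‖, ?_⟩ ⟨x, hx, rfl⟩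
  rintro r ⟨y, hy, rfl⟩
  simpa [hy] using (norm_inner_le_norm y (A y)).trans
    (mul_le_mul_of_nonneg_left (A.le_opNorm y) (norm_nonneg y))

lemma exists_lt_norm_inner_of_lt_numRad [Nontrivial E] (A : E →L[ℂ] E) {r : ℝ}
    (hr : r < numRad A) : ∃ x : E, ‖x‖ = 1 ∧ r < ‖inner ℂ x (A x)‖ := by
  obtain ⟨x₀, hx₀⟩ := exists_norm_eq E zero_le_one
  obtain ⟨_, ⟨x, hx, rfl⟩, hrx⟩ := exists_lt_of_lt_csSup (by exact ⟨_, x₀, hx₀, rfl⟩) hr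
  exact ⟨x, hx, hrx⟩

lemma inner_add_smul_apply_self (T S : E →L[ℂ] E) (c : ℂ) (x : E) :
    inner ℂ x ((T + c • S) x) = inner ℂ x (T x) + c * inner ℂ x (S x) := by
  simp

theorem wBOrth.exists_seq_tendsto_numRad_and_re_ge [Nontrivial E] {T S : E →L[ℂ] E}
    (h : wBOrth T S) (c : ℂ) :
    ∃ x : ℕ → E, (∀ n, ‖x n‖ = 1) ∧
      Tendsto (fun n => ‖inner ℂ (x n) (T (x n))‖) atTop (𝓝 (numRad T)) ∧
      ∃ ε : ℕ → ℝ, Tendsto ε atTop (𝓝 0) ∧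
        ∀ n, -ε n ≤ (conj (inner ℂ (x n) (T (x n))) * (c * inner ℂ (x n) (S (x n)))).re := by
  set t : ℕ → ℝ := fun n => 1 / ((n : ℝ) + 1)
  have ht : ∀ n, 0 < t n := fun n => by positivity
  have ht0 : Tendsto t atTop (𝓝 0) := tendsto_one_div_add_atTop_nhds_zero_nat
  -- The slack `(t n)²` is `o(t n)`, so it still vanishes after the cross term is divided by `t n`.
  have hex (n : ℕ) : ∃ x : E, ‖x‖ = 1 ∧
      numRad T - t n ^ 2 < ‖inner ℂ x ((T + ((t n : ℂ) * c) • S) x)‖ :=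
    exists_lt_norm_inner_of_lt_numRad _ <| (h _).trans_lt' <| by linarith [pow_pos (ht n) 2]
  choose x hx hlt using hex
  simp only [inner_add_smul_apply_self, mul_assoc] at hlt
  set a : ℕ → ℂ := fun n => inner ℂ (x n) (T (x n))
  set b : ℕ → ℂ := fun n => inner ℂ (x n) (S (x n))
  have ha (n : ℕ) : ‖a n‖ ≤ numRad T := norm_inner_le_numRad T (hx n)
  have hcb (n : ℕ) : ‖c * b n‖ ≤ ‖c‖ * numRad S := by
    rw [norm_mul]; exact mul_le_mul_of_nonneg_left (norm_inner_le_numRad S (hx n)) (norm_nonneg c)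
  refine ⟨x, hx, ?_, fun n => t n * (numRad T + (‖c‖ * numRad S) ^ 2), ?_, fun n => ?_⟩
  · have hlower (n : ℕ) : numRad T - t n ^ 2 - t n * (‖c‖ * numRad S) ≤ ‖a n‖ := by
      have := (hlt n).le.trans (norm_add_le _ _)
      rw [norm_mul, Complex.norm_real, Real.norm_of_nonneg (ht n).le] at this
      nlinarith [hcb n, ht n]
    refine tendsto_of_tendsto_of_tendsto_of_le_of_le ?_ tendsto_const_nhds hlower ha
    simpa using (tendsto_const_nhds.sub (ht0.pow 2)).sub (ht0.mul_const (‖c‖ * numRad S))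
  · simpa using ht0.mul_const (numRad T + (‖c‖ * numRad S) ^ 2)
  · have hre := Complex.neg_mul_le_re_conj_mul (numRad_nonneg T) (ht n) (ha n) (hlt n).le
    have hsq := pow_le_pow_left₀ (norm_nonneg _) (hcb n) 2
    nlinarith [ht n]

theorem numRad_le_numRad_add_smul_of_seq {S T : E →L[ℂ] E} (c : ℂ) {x : ℕ → E}
    (hx : ∀ n, ‖x n‖ = 1)
    (hS : Tendsto (fun n => ‖inner ℂ (x n) (S (x n))‖) atTop (𝓝 (numRad S)))
    {ε : ℕ → ℝ} (hε : Tendsto ε atTop (𝓝 0))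
    (hre : ∀ n, -ε n ≤ (conj (inner ℂ (x n) (S (x n))) * (c * inner ℂ (x n) (T (x n)))).re) :
    numRad S ≤ numRad (S + c • T) := by
  have hsq (n : ℕ) : ‖inner ℂ (x n) (S (x n))‖ ^ 2 - 2 * ε n ≤ numRad (S + c • T) ^ 2 := by
    have hle := norm_inner_le_numRad (S + c • T) (hx n)
    rw [inner_add_smul_apply_self] at hle
    calc ‖inner ℂ (x n) (S (x n))‖ ^ 2 - 2 * ε n
        ≤ ‖inner ℂ (x n) (S (x n)) + c * inner ℂ (x n) (T (x n))‖ ^ 2 := by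
          rw [Complex.norm_add_sq_eq]; nlinarith [hre n, sq_nonneg ‖c * inner ℂ (x n) (T (x n))‖]
      _ ≤ numRad (S + c • T) ^ 2 := pow_le_pow_left₀ (norm_nonneg _) hle 2
  have hlim := le_of_tendsto' (by simpa using (hS.pow 2).sub (hε.const_mul 2)) hsq
  exact (pow_le_pow_iff_left₀ (numRad_nonneg S) (numRad_nonneg _) two_ne_zero).mp hlim

theorem wBOrth.symm_of_tendsto_imp [Nontrivial E] {T S : E →L[ℂ] E} (h : wBOrth T S)
    (hM : ∀ x : ℕ → E, (∀ n, ‖x n‖ = 1) →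
      Tendsto (fun n => ‖inner ℂ (x n) (T (x n))‖) atTop (𝓝 (numRad T)) →
        Tendsto (fun n => ‖inner ℂ (x n) (S (x n))‖) atTop (𝓝 (numRad S))) :
    wBOrth S T := by
  intro c
  obtain ⟨x, hx, hT, ε, hε, hre⟩ := h.exists_seq_tendsto_numRad_and_re_ge (conj c)
  refine numRad_le_numRad_add_smul_of_seq c hx (hM x hx hT) hε fun n => (hre n).trans_eq ?_
  rw [← Complex.conj_re]
  simp only [map_mul, Complex.conj_conj]
  ring_nf

end

theorem stmt_11 (T S : H →L[ℂ] H)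
    (hM : ∀ x : ℕ → H, (∀ n, ‖x n‖ = 1) →
      (Tendsto (fun n => ‖(inner ℂ (x n) (T (x n)) : ℂ)‖) atTop (𝓝 (numRad T)) ↔
        Tendsto (fun n => ‖(inner ℂ (x n) (S (x n)) : ℂ)‖) atTop (𝓝 (numRad S)))) :
    wBOrth T S ↔ wBOrth S T := by
  rcases subsingleton_or_nontrivial H with _ | _
  · obtain rfl := Subsingleton.elim T S
    rfl
  · exact ⟨fun h => h.symm_of_tendsto_imp fun x hx => (hM x hx).1,
      fun h => h.symm_of_tendsto_imp fun x hx => (hM x hx).2⟩
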